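/- arXiv:2509.15256 — 3 statements merged into one kernel-verified Lean document; each statement's English description precedes it below -/
import Mathlib

section
/- Under the hypotheses of the SGD convergence theorem (f : E → ℝ L-smooth and bounded below by f*, updates θ_{k+1} = θ_k − η·g_k with unbiased conditional gradients of conditional variance at most σ², 0 < η ≤ 1/L), the limit superior as K → ∞ of min_{0 ≤ k ≤ K−1} E[‖∇f(θ_k)‖²] is at most η·L·σ²; in particular, the smallest expected squared gradient norm along the iterates converges to a neighborhood of zero of radius η·L·σ². -/
/-! The descent lemma for an `L`-smooth `f` gives along every sample path
`η ⟪∇f θₖ, gₖ⟫ - L η² / 2 ‖gₖ‖² ≤ f θₖ - f θₖ₊₁`, which telescopes to `f θ₀ - f*`.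
Taking expectations, unbiasedness turns `E ⟪∇f θₖ, gₖ⟫` into `E ‖∇f θₖ‖²`, and since the noise
`gₖ - ∇f θₖ` is orthogonal in `L²` to the `ℱ k`-measurable `∇f θₖ`,
`E ‖gₖ‖² = E ‖∇f θₖ‖² + E ‖gₖ - ∇f θₖ‖² ≤ E ‖∇f θₖ‖² + σ²`. With `η L ≤ 1` this leaves
`∑_{k<K} E ‖∇f θₖ‖² ≤ 2 (f θ₀ - f*) / η + K η L σ²`, so the minimum over `k < K` is at most
`2 (f θ₀ - f*) / (η K) + η L σ²`, which tends to `η L σ²`. -/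

open MeasureTheory Finset Filter
open scoped RealInnerProductSpace NNReal Topology

section Smooth

variable {E : Type*} [NormedAddCommGroup E] [InnerProductSpace ℝ E] [CompleteSpace E]
  {f : E → ℝ} {L : ℝ≥0}

theorem apply_add_le_of_lipschitzWith_gradient (hdiff : Differentiable ℝ f)
    (hlip : LipschitzWith L (gradient f)) (x v : E) :
    f (x + v) ≤ f x + ⟪gradient f x, v⟫ + L / 2 * ‖v‖ ^ 2 := by
  set φ : ℝ → ℝ := fun t => f (x + t • v) - t * ⟪gradient f x, v⟫ - L / 2 * t ^ 2 * ‖v‖ ^ 2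
  have hφ : ∀ t, HasDerivAt φ
      (⟪gradient f (x + t • v) - gradient f x, v⟫ - L * t * ‖v‖ ^ 2) t := by
    intro t
    have hline : HasDerivAt (fun s : ℝ => x + s • v) v t := by
      simpa using ((hasDerivAt_id t).smul_const v).const_add x
    refine ((((hdiff _).hasFDerivAt.comp_hasDerivAt t hline).sub
      ((hasDerivAt_id t).mul_const ⟪gradient f x, v⟫)).sub
      (((hasDerivAt_pow 2 t).const_mul (L / 2 : ℝ)).mul_const (‖v‖ ^ 2))).congr_deriv ?_
    simp only [inner_sub_left, inner_gradient_left]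
    ring
  have hφ' : ∀ t ∈ interior (Set.Icc (0 : ℝ) 1),
      ⟪gradient f (x + t • v) - gradient f x, v⟫ - L * t * ‖v‖ ^ 2 ≤ 0 := by
    intro t ht
    rw [interior_Icc] at ht
    have hdist : ‖gradient f (x + t • v) - gradient f x‖ ≤ L * (t * ‖v‖) := by
      simpa [norm_smul, abs_of_pos ht.1] using hlip.norm_sub_le (x + t • v) x
    have := real_inner_le_norm (gradient f (x + t • v) - gradient f x) v
    nlinarith [norm_nonneg v]
  have hanti : AntitoneOn φ (Set.Icc 0 1) :=
    antitoneOn_of_hasDerivWithinAt_nonpos (convex_Icc 0 1)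
      (fun t _ => (hφ t).continuousAt.continuousWithinAt)
      (fun t _ => (hφ t).hasDerivWithinAt) hφ'
  have := hanti (by simp) (by simp) zero_le_one
  norm_num [φ, -inner_gradient_left] at this
  linarith

theorem apply_sub_smul_le_of_lipschitzWith_gradient (hdiff : Differentiable ℝ f)
    (hlip : LipschitzWith L (gradient f)) (x v : E) (η : ℝ) :
    f (x - η • v) ≤ f x - η * ⟪gradient f x, v⟫ + L * η ^ 2 / 2 * ‖v‖ ^ 2 := by
  have := apply_add_le_of_lipschitzWith_gradient hdiff hlip x (-(η • v))
  rw [← sub_eq_add_neg, inner_neg_right, inner_smul_right, norm_neg, norm_smul,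
    Real.norm_eq_abs, mul_pow, sq_abs] at this
  linarith

theorem sum_descent_le_of_lipschitzWith_gradient (hdiff : Differentiable ℝ f)
    (hlip : LipschitzWith L (gradient f)) {fstar : ℝ} (hbelow : ∀ y, fstar ≤ f y)
    {x v : ℕ → E} {η : ℝ} (hx : ∀ k, x (k + 1) = x k - η • v k) (K : ℕ) :
    ∑ k ∈ range K, (η * ⟪gradient f (x k), v k⟫ - L * η ^ 2 / 2 * ‖v k‖ ^ 2)
      ≤ f (x 0) - fstar :=
  calc ∑ k ∈ range K, (η * ⟪gradient f (x k), v k⟫ - L * η ^ 2 / 2 * ‖v k‖ ^ 2)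
      ≤ ∑ k ∈ range K, (f (x k) - f (x (k + 1))) := by
        refine sum_le_sum fun k _ => ?_
        have := apply_sub_smul_le_of_lipschitzWith_gradient hdiff hlip (x k) (v k) η
        rw [← hx k] at this
        linarith
    _ = f (x 0) - f (x K) := sum_range_sub' _ _
    _ ≤ f (x 0) - fstar := by linarith [hbelow (x K)]

end Smooth

theorem LipschitzWith.memLp_comp {Ω E F : Type*} {m0 : MeasurableSpace Ω} {μ : Measure Ω}
    [IsFiniteMeasure μ] [NormedAddCommGroup E] [NormedAddCommGroup F] {p : ENNReal}
    {g : E → F} {K : ℝ≥0} (hg : LipschitzWith K g) {X : Ω → E} (hX : MemLp X p μ) :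
    MemLp (fun ω => g (X ω)) p μ := by
  have hshift := (hg.sub (LipschitzWith.const (g 0))).comp_memLp (by simp) hX
  convert hshift.add (memLp_const (g 0)) using 1
  ext ω
  simp

section CondExp

variable {Ω E : Type*} [NormedAddCommGroup E] [InnerProductSpace ℝ E]
  {m m0 : MeasurableSpace Ω} {μ : Measure Ω} {X Y : Ω → E}

theorem MeasureTheory.MemLp.integrable_inner (hX : MemLp X 2 μ) (hY : MemLp Y 2 μ) :
    Integrable (fun ω => ⟪X ω, Y ω⟫) μ := by
  refine (L2.integrable_inner (𝕜 := ℝ) (hX.toLp X) (hY.toLp Y)).congr ?_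
  filter_upwards [hX.coeFn_toLp, hY.coeFn_toLp] with ω hXω hYω
  rw [hXω, hYω]

theorem integral_le_of_condExp_le [IsProbabilityMeasure μ] (hm : m ≤ m0) {h : Ω → ℝ} {c : ℝ}
    (hc : ∀ᵐ ω ∂μ, (μ[h|m]) ω ≤ c) : ∫ ω, h ω ∂μ ≤ c := by
  rw [← integral_condExp hm]
  simpa using integral_mono_ae integrable_condExp (integrable_const c) hc

variable [CompleteSpace E] [IsFiniteMeasure μ]

theorem integral_inner_condExp (hm : m ≤ m0) (hX : MemLp X 2 μ)
    (hXm : AEStronglyMeasurable[m] X μ) (hY : MemLp Y 2 μ) :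
    ∫ ω, ⟪X ω, (μ[Y|m]) ω⟫ ∂μ = ∫ ω, ⟪X ω, Y ω⟫ ∂μ := by
  have hXm' : AEStronglyMeasurable[m] (hX.toLp X : Ω → E) μ := hXm.congr hX.coeFn_toLp.symm
  calc ∫ ω, ⟪X ω, (μ[Y|m]) ω⟫ ∂μ
      = ⟪(condExpL2 E ℝ hm (hY.toLp Y) : Lp E 2 μ), hX.toLp X⟫ := by
        rw [L2.inner_def]
        refine integral_congr_ae ?_
        filter_upwards [hX.coeFn_toLp, hY.condExpL2_ae_eq_condExp (𝕜 := ℝ) hm] with ω hXω hYω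
        rw [hXω, hYω, real_inner_comm]
    _ = ⟪hY.toLp Y, hX.toLp X⟫ := inner_condExpL2_eq_inner_fun hm _ _ hXm'
    _ = ∫ ω, ⟪X ω, Y ω⟫ ∂μ := by
        rw [L2.inner_def]
        refine integral_congr_ae ?_
        filter_upwards [hX.coeFn_toLp, hY.coeFn_toLp] with ω hXω hYω
        rw [hXω, hYω, real_inner_comm]

theorem integral_inner_eq_integral_norm_sq_of_condExp_ae_eq (hm : m ≤ m0) (hX : MemLp X 2 μ)
    (hXm : AEStronglyMeasurable[m] X μ) (hY : MemLp Y 2 μ) (hYX : μ[Y|m] =ᵐ[μ] X) :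
    ∫ ω, ⟪X ω, Y ω⟫ ∂μ = ∫ ω, ‖X ω‖ ^ 2 ∂μ := by
  rw [← integral_inner_condExp hm hX hXm hY]
  refine integral_congr_ae ?_
  filter_upwards [hYX] with ω hω
  rw [hω, real_inner_self_eq_norm_sq]

theorem integral_norm_sq_eq_add_of_condExp_ae_eq (hm : m ≤ m0) (hX : MemLp X 2 μ)
    (hXm : AEStronglyMeasurable[m] X μ) (hY : MemLp Y 2 μ) (hYX : μ[Y|m] =ᵐ[μ] X) :
    ∫ ω, ‖Y ω‖ ^ 2 ∂μ = ∫ ω, ‖X ω‖ ^ 2 ∂μ + ∫ ω, ‖Y ω - X ω‖ ^ 2 ∂μ := by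
  have hexpand : ∀ ω, ‖Y ω‖ ^ 2 = ‖Y ω - X ω‖ ^ 2 + 2 * ⟪X ω, Y ω⟫ - ‖X ω‖ ^ 2 := fun ω => by
    rw [norm_sub_sq_real, real_inner_comm]; ring
  have hinner := integral_inner_eq_integral_norm_sq_of_condExp_ae_eq hm hX hXm hY hYX
  simp_rw [hexpand]
  have hYX2 : Integrable (fun ω => ‖Y ω - X ω‖ ^ 2) μ :=
    (hY.sub hX).integrable_norm_pow two_ne_zero
  have hinner2 : Integrable (fun ω => 2 * ⟪X ω, Y ω⟫) μ := (hX.integrable_inner hY).const_mul 2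
  rw [integral_sub (hYX2.fun_add hinner2) (hX.integrable_norm_pow two_ne_zero),
    integral_add hYX2 hinner2, integral_const_mul, hinner]
  ring

end CondExp

theorem limsup_sInf_image_Iio_le {a : ℕ → ℝ} (ha : ∀ k, 0 ≤ a k) {c r : ℝ}
    (hsum : ∀ K : ℕ, ∑ k ∈ range K, a k ≤ c + K * r) :
    limsup (fun K : ℕ => sInf (a '' Set.Iio K)) atTop ≤ r := by
  have hmin : ∀ K : ℕ, 0 < K → sInf (a '' Set.Iio K) ≤ c / K + r := by
    intro K hK
    have hbdd : BddBelow (a '' Set.Iio K) := ⟨0, by rintro _ ⟨k, -, rfl⟩; exact ha k⟩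
    have hK' : (0 : ℝ) < K := by exact_mod_cast hK
    have : K * sInf (a '' Set.Iio K) ≤ c + K * r := by
      refine le_trans ?_ (hsum K)
      simpa using card_nsmul_le_sum (range K) a _ fun k hk =>
        csInf_le hbdd ⟨k, by simpa using hk, rfl⟩
    rw [div_add' _ _ _ hK'.ne', le_div_iff₀ hK']
    linarith
  have hlim : Tendsto (fun K : ℕ => c / K + r) atTop (𝓝 r) := by
    simpa using (tendsto_const_div_atTop_nhds_zero_nat c).add_const r
  calc limsup (fun K : ℕ => sInf (a '' Set.Iio K)) atTop
      ≤ limsup (fun K : ℕ => c / K + r) atTop :=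
        limsup_le_limsup ((eventually_gt_atTop 0).mono hmin)
          (isCoboundedUnder_le_of_le atTop fun K => Real.sInf_nonneg (by
            rintro _ ⟨k, -, rfl⟩; exact ha k))
          hlim.isBoundedUnder_le
    _ = r := hlim.limsup_eq

theorem sum_integral_descent_le_of_lipschitzWith_gradient {E : Type*} [NormedAddCommGroup E]
    [InnerProductSpace ℝ E] [CompleteSpace E] {f : E → ℝ} {L : ℝ≥0} (hdiff : Differentiable ℝ f)
    (hlip : LipschitzWith L (gradient f)) {fstar : ℝ} (hbelow : ∀ x, fstar ≤ f x)
    {Ω : Type*} {m0 : MeasurableSpace Ω} {μ : Measure Ω} [IsProbabilityMeasure μ]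
    {θ v : ℕ → Ω → E} {θ₀ : E} {η : ℝ} (hθ0 : ∀ ω, θ 0 ω = θ₀)
    (hθ : ∀ k ω, θ (k + 1) ω = θ k ω - η • v k ω)
    (hG : ∀ k, MemLp (fun ω => gradient f (θ k ω)) 2 μ) (hv : ∀ k, MemLp (v k) 2 μ) (K : ℕ) :
    ∑ k ∈ range K, (η * ∫ ω, ⟪gradient f (θ k ω), v k ω⟫ ∂μ
      - L * η ^ 2 / 2 * ∫ ω, ‖v k ω‖ ^ 2 ∂μ) ≤ f θ₀ - fstar := by
  have hinner : ∀ k, Integrable (fun ω => η * ⟪gradient f (θ k ω), v k ω⟫) μ := fun k =>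
    ((hG k).integrable_inner (hv k)).const_mul η
  have hsq : ∀ k, Integrable (fun ω => L * η ^ 2 / 2 * ‖v k ω‖ ^ 2) μ := fun k =>
    ((hv k).integrable_norm_pow two_ne_zero).const_mul _
  -- Summing before integrating needs no integrability of `f ∘ θ k`.
  calc ∑ k ∈ range K, (η * ∫ ω, ⟪gradient f (θ k ω), v k ω⟫ ∂μ
        - L * η ^ 2 / 2 * ∫ ω, ‖v k ω‖ ^ 2 ∂μ)
      = ∫ ω, ∑ k ∈ range K,
          (η * ⟪gradient f (θ k ω), v k ω⟫ - L * η ^ 2 / 2 * ‖v k ω‖ ^ 2) ∂μ := by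
        rw [integral_finsetSum _ fun k _ => (hinner k).sub' (hsq k)]
        refine sum_congr rfl fun k _ => ?_
        rw [integral_sub (hinner k) (hsq k), integral_const_mul, integral_const_mul]
    _ ≤ ∫ _, (f θ₀ - fstar) ∂μ := by
        refine integral_mono (integrable_finsetSum _ fun k _ => (hinner k).sub' (hsq k))
          (integrable_const _) fun ω => ?_
        simpa only [hθ0] using sum_descent_le_of_lipschitzWith_gradient hdiff hlip hbelow
          (x := (θ · ω)) (fun k => hθ k ω) K
    _ = f θ₀ - fstar := by simp

theorem sgd_sum_integral_gradient_norm_sq_le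
    {E : Type*} [NormedAddCommGroup E] [InnerProductSpace ℝ E] [CompleteSpace E]
    {f : E → ℝ} {L : ℝ≥0} (hdiff : Differentiable ℝ f) (hlip : LipschitzWith L (gradient f))
    {fstar : ℝ} (hbelow : ∀ x, fstar ≤ f x)
    {Ω : Type*} {m0 : MeasurableSpace Ω} {μ : Measure Ω} [IsProbabilityMeasure μ]
    {ℱ : Filtration ℕ m0} {θ g : ℕ → Ω → E} {θ₀ : E} {η σ : ℝ}
    (hη : 0 < η) (hηL : η * L ≤ 1)
    (hθ0 : ∀ ω, θ 0 ω = θ₀) (hupd : ∀ k ω, θ (k + 1) ω = θ k ω - η • g k ω)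
    (hθadapted : ∀ k, StronglyMeasurable[ℱ k] (θ k)) (hgmem : ∀ k, MemLp (g k) 2 μ)
    (hmean : ∀ k, μ[g k|ℱ k] =ᵐ[μ] fun ω => gradient f (θ k ω))
    (hvar : ∀ k, ∀ᵐ ω ∂μ,
      (μ[fun ω' => ‖g k ω' - gradient f (θ k ω')‖ ^ 2|ℱ k]) ω ≤ σ ^ 2)
    (K : ℕ) :
    ∑ k ∈ range K, ∫ ω, ‖gradient f (θ k ω)‖ ^ 2 ∂μ
      ≤ 2 * (f θ₀ - fstar) / η + K * (η * L * σ ^ 2) := by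
  have hθmem : ∀ k, MemLp (θ k) 2 μ := by
    intro k
    induction k with
    | zero => rw [funext hθ0]; exact memLp_const θ₀
    | succ k ih => rw [funext (hupd k)]; exact ih.sub ((hgmem k).const_smul η)
  have hGmem : ∀ k, MemLp (fun ω => gradient f (θ k ω)) 2 μ := fun k =>
    hlip.memLp_comp (hθmem k)
  have hGm : ∀ k, AEStronglyMeasurable[ℱ k] (fun ω => gradient f (θ k ω)) μ := fun k =>
    (hlip.continuous.comp_stronglyMeasurable (hθadapted k)).aestronglyMeasurable
  have hinner : ∀ k, ∫ ω, ⟪gradient f (θ k ω), g k ω⟫ ∂μ = ∫ ω, ‖gradient f (θ k ω)‖ ^ 2 ∂μ :=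
    fun k => integral_inner_eq_integral_norm_sq_of_condExp_ae_eq (ℱ.le k) (hGmem k) (hGm k)
      (hgmem k) (hmean k)
  have hsq : ∀ k, ∫ ω, ‖g k ω‖ ^ 2 ∂μ ≤ ∫ ω, ‖gradient f (θ k ω)‖ ^ 2 ∂μ + σ ^ 2 := fun k => by
    rw [integral_norm_sq_eq_add_of_condExp_ae_eq (ℱ.le k) (hGmem k) (hGm k) (hgmem k) (hmean k)]
    linarith [integral_le_of_condExp_le (ℱ.le k) (hvar k)]
  have hterm : ∀ k, η / 2 * ∫ ω, ‖gradient f (θ k ω)‖ ^ 2 ∂μ - L * η ^ 2 / 2 * σ ^ 2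
      ≤ η * ∫ ω, ⟪gradient f (θ k ω), g k ω⟫ ∂μ - L * η ^ 2 / 2 * ∫ ω, ‖g k ω‖ ^ 2 ∂μ := by
    intro k
    have hA : 0 ≤ ∫ ω, ‖gradient f (θ k ω)‖ ^ 2 ∂μ := integral_nonneg fun ω => by positivity
    rw [hinner k]
    have hLη : 0 ≤ L * η ^ 2 / 2 := by positivity
    nlinarith [mul_le_mul_of_nonneg_left (hsq k) hLη,
      mul_nonneg (mul_nonneg hη.le (sub_nonneg.2 hηL)) hA]
  have hsum := (sum_le_sum fun k _ => hterm k).trans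
    (sum_integral_descent_le_of_lipschitzWith_gradient hdiff hlip hbelow hθ0 hupd hGmem hgmem K)
  rw [sum_sub_distrib, ← mul_sum, sum_const, card_range, nsmul_eq_mul] at hsum
  rw [div_add' _ _ _ hη.ne', le_div_iff₀ hη]
  nlinarith

/-- Under the hypotheses of the SGD convergence theorem, the limit superior as
`K → ∞` of `min_{0 ≤ k ≤ K-1} E[‖∇f(θ_k)‖²]` is at most `ηLσ²`: the smallest
expected squared gradient norm converges to a neighborhood of zero of radius
`ηLσ²`. -/
theorem sgd_gradient_norm_limsup
    {E : Type*} [NormedAddCommGroup E] [InnerProductSpace ℝ E] [CompleteSpace E]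
    (f : E → ℝ) (L : ℝ) (hL : 0 < L)
    (hdiff : Differentiable ℝ f)
    (hlip : LipschitzWith L.toNNReal (gradient f))
    (fstar : ℝ) (hbelow : ∀ x, fstar ≤ f x)
    {Ω : Type*} {m0 : MeasurableSpace Ω} (μ : Measure Ω) [IsProbabilityMeasure μ]
    (ℱ : Filtration ℕ m0)
    (θ g : ℕ → Ω → E) (θ₀ : E) (η σ : ℝ)
    (hη : 0 < η) (hηL : η ≤ 1 / L)
    (hθ0 : ∀ ω, θ 0 ω = θ₀)
    (hupd : ∀ k ω, θ (k + 1) ω = θ k ω - η • g k ω)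
    (hθadapted : ∀ k, StronglyMeasurable[ℱ k] (θ k))
    (hgmem : ∀ k, MemLp (g k) 2 μ)
    (hmean : ∀ k, μ[g k|ℱ k] =ᵐ[μ] fun ω => gradient f (θ k ω))
    (hvar : ∀ k, ∀ᵐ ω ∂μ,
      (μ[fun ω' => ‖g k ω' - gradient f (θ k ω')‖ ^ 2|ℱ k]) ω ≤ σ ^ 2) :
    Filter.limsup
        (fun K : ℕ =>
          sInf ((fun k => ∫ ω, ‖gradient f (θ k ω)‖ ^ 2 ∂μ) '' Set.Iio K))
        Filter.atTop
      ≤ η * L * σ ^ 2 := by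
  lift L to ℝ≥0 using hL.le
  rw [Real.toNNReal_coe] at hlip
  have hηL' : η * L ≤ 1 := (le_div_iff₀ hL).1 hηL
  exact limsup_sInf_image_Iio_le (fun k => integral_nonneg fun ω => by positivity)
    (sgd_sum_integral_gradient_norm_sq_le hdiff hlip hbelow hη hηL' hθ0 hupd hθadapted hgmem
      hmean hvar)
end

section
/- For every n ≥ 1, the softmax map on ℝⁿ defined by softmax(x)_i = exp(x_i) / Σ_{j} exp(x_j) is 1-Lipschitz with respect to the Euclidean norm: ‖softmax(x) − softmax(y)‖₂ ≤ ‖x − y‖₂ for all x, y ∈ ℝⁿ. -/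
/-!
At `x` the Jacobian of softmax is `J = diag p - p pᵀ` with `p = softmax x`, so
`(J v)ᵢ = pᵢ (vᵢ - m)` where `m = ∑ⱼ pⱼ vⱼ`. Since `0 ≤ pᵢ ≤ 1`,
`‖J v‖² ≤ ∑ᵢ pᵢ (vᵢ - m)² = ∑ᵢ pᵢ vᵢ² - m² ≤ ‖v‖²`, i.e. `‖J‖ ≤ 1`, and the mean value
inequality turns this bound into the Lipschitz estimate.
-/

noncomputable def softmax {n : ℕ} (x : EuclideanSpace ℝ (Fin n)) :
    EuclideanSpace ℝ (Fin n) :=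
  WithLp.toLp 2 (fun i => Real.exp (x i) / ∑ j, Real.exp (x j))

open Finset

section Jacobian

variable {ι : Type*} [Fintype ι]

theorem sum_sq_mul_sub_sum_mul_le {p : ι → ℝ} (hp : ∀ i, 0 ≤ p i) (hp₁ : ∑ i, p i ≤ 1)
    (v : ι → ℝ) : ∑ i, (p i * (v i - ∑ j, p j * v j)) ^ 2 ≤ ∑ i, v i ^ 2 := by
  set m := ∑ j, p j * v j
  have hp_le : ∀ i, p i ≤ 1 := fun i =>
    (single_le_sum (fun j _ => hp j) (mem_univ i)).trans hp₁
  calc ∑ i, (p i * (v i - m)) ^ 2 ≤ ∑ i, p i * (v i - m) ^ 2 := by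
        gcongr with i
        have hp_sq : p i ^ 2 ≤ p i := by nlinarith [hp i, hp_le i]
        rw [mul_pow]
        exact mul_le_mul_of_nonneg_right hp_sq (sq_nonneg _)
    _ = ∑ i, p i * v i ^ 2 - 2 * m ^ 2 + m ^ 2 * ∑ i, p i := by
        have expand : ∀ i, p i * (v i - m) ^ 2 =
            p i * v i ^ 2 - 2 * m * (p i * v i) + m ^ 2 * p i := fun i => by ring
        simp only [expand, sum_add_distrib, sum_sub_distrib, ← mul_sum]
        ring
    _ ≤ ∑ i, p i * v i ^ 2 := by nlinarith [sq_nonneg m]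
    _ ≤ ∑ i, v i ^ 2 := by
        gcongr with i
        exact mul_le_of_le_one_left (sq_nonneg _) (hp_le i)

/-- The Jacobian of softmax, parametrised by the value `p` of softmax rather than by the point. -/
noncomputable def softmaxJacobian (p : ι → ℝ) : EuclideanSpace ℝ ι →L[ℝ] EuclideanSpace ℝ ι :=
  LinearMap.toContinuousLinearMap
    { toFun := fun v => WithLp.toLp 2 fun i => p i * (v i - ∑ j, p j * v j)
      map_add' := fun v w => by
        ext i
        simp only [PiLp.add_apply, mul_add, sum_add_distrib]
        ring
      map_smul' := fun c v => by
        ext i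
        simp [mul_sum, mul_sub, mul_left_comm] }

theorem softmaxJacobian_apply (p : ι → ℝ) (v : EuclideanSpace ℝ ι) (i : ι) :
    softmaxJacobian p v i = p i * (v i - ∑ j, p j * v j) := rfl

theorem norm_softmaxJacobian_le_one {p : ι → ℝ} (hp : ∀ i, 0 ≤ p i) (hp₁ : ∑ i, p i ≤ 1) :
    ‖softmaxJacobian p‖ ≤ 1 := by
  refine ContinuousLinearMap.opNorm_le_bound _ zero_le_one fun v => ?_
  rw [one_mul, EuclideanSpace.norm_eq, EuclideanSpace.norm_eq]
  refine Real.sqrt_le_sqrt ?_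
  simpa only [Real.norm_eq_abs, sq_abs, softmaxJacobian_apply] using
    sum_sq_mul_sub_sum_mul_le hp hp₁ v

end Jacobian

section Softmax

variable {n : ℕ}

theorem softmax_apply (x : EuclideanSpace ℝ (Fin n)) (i : Fin n) :
    softmax x i = Real.exp (x i) / ∑ j, Real.exp (x j) := rfl

theorem softmax_nonneg (x : EuclideanSpace ℝ (Fin n)) (i : Fin n) : 0 ≤ softmax x i := by
  rw [softmax_apply]
  positivity

theorem sum_softmax_le_one (x : EuclideanSpace ℝ (Fin n)) : ∑ i, softmax x i ≤ 1 := by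
  simp only [softmax_apply, ← sum_div]
  exact div_self_le_one _

theorem hasFDerivAt_softmax (x : EuclideanSpace ℝ (Fin n)) :
    HasFDerivAt softmax (softmaxJacobian (softmax x)) x := by
  rw [← hasFDerivWithinAt_univ, hasFDerivWithinAt_piLp]
  intro i
  rw [hasFDerivWithinAt_univ]
  have hS : ∑ j, Real.exp (x j) ≠ 0 :=
    (sum_pos (fun j _ => Real.exp_pos (x j)) ⟨i, mem_univ i⟩).ne'
  have hcoord : ∀ j, HasFDerivAt (fun y : EuclideanSpace ℝ (Fin n) => y j)
      (PiLp.proj (𝕜 := ℝ) 2 (fun _ : Fin n => ℝ) j) x :=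
    fun j => (PiLp.proj (𝕜 := ℝ) 2 (fun _ : Fin n => ℝ) j).hasFDerivAt
  have hsum := HasFDerivAt.fun_sum (u := univ) fun j _ => (hcoord j).exp
  have hprod := (hcoord i).exp.mul ((hasDerivAt_inv hS).comp_hasFDerivAt x hsum)
  refine (hprod.congr_fderiv ?_).congr_of_eventuallyEq
    (Filter.Eventually.of_forall fun y => div_eq_mul_inv _ _)
  refine ContinuousLinearMap.ext fun v => ?_
  simp only [neg_smul, smul_neg, Function.comp_apply, add_apply, neg_apply, smul_apply,
    _root_.sum_apply, PiLp.proj_apply, smul_eq_mul, ContinuousLinearMap.comp_apply,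
    softmaxJacobian_apply, softmax_apply, div_mul_eq_mul_div, ← sum_div]
  field_simp
  ring

theorem lipschitzWith_one_softmax : LipschitzWith 1 (softmax (n := n)) := by
  rw [← lipschitzOnWith_univ]
  refine convex_univ.lipschitzOnWith_of_nnnorm_hasFDerivWithin_le
    (fun x _ => (hasFDerivAt_softmax x).hasFDerivWithinAt) fun x _ => ?_
  rw [← NNReal.coe_le_coe]
  exact norm_softmaxJacobian_le_one (softmax_nonneg x) (sum_softmax_le_one x)

end Softmax

theorem softmax_one_lipschitz_general (n : ℕ)
    (x y : EuclideanSpace ℝ (Fin n)) :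
    ‖softmax x - softmax y‖ ≤ ‖x - y‖ := by
  simpa using lipschitzWith_one_softmax.norm_sub_le x y

/-- Softmax is `1`-Lipschitz with respect to the Euclidean norm. -/
theorem softmax_one_lipschitz (n : ℕ) (hn : 1 ≤ n)
    (x y : EuclideanSpace ℝ (Fin n)) :
    ‖softmax x - softmax y‖ ≤ ‖x - y‖ :=
  softmax_one_lipschitz_general n x y
end

section
/- Let (Z, μ) be a probability space (the data distribution), (H, P) a measurable space of hypotheses with prior probability measure P, and ℓ : H × Z → ℝ a jointly measurable loss with 0 ≤ ℓ(h,z) ≤ 1. For h ∈ H let R(h) = ∫ ℓ(h,z) dμ(z) be the true risk, and for a sample S = (z₁,…,z_m) ∈ Z^m let R̂(h,S) = (1/m)·Σ_{i=1}^m ℓ(h,z_i) be the empirical risk. Then for every δ ∈ (0,1), with μ^{⊗m}-probability at least 1 − δ over the draw of S, the following holds simultaneously for every probability measure Q on H with finite KL(Q‖P): E_{h∼Q}[R(h)] ≤ E_{h∼Q}[R̂(h,S)] + √((KL(Q‖P) + ln(2m/δ)) / (2m)). -/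
/-!
Write `Δ_S(h) = R(h) - R̂(h,S)`. By Maurer's inequality, for each fixed `h` the expectation
over the sample of `exp (2m Δ_S(h)²)` is at most `m + 1`: convexity of
`t ↦ exp (2m (t/m - p)²)` reduces the sum of `[0,1]`-valued variables to a binomial one, whose
terms are controlled by the binary Pinsker inequality `kl(k/m ‖ p) ≥ 2 (k/m - p)²`. By Fubini
and Markov, `∫ exp (2m Δ_S²) dP < 2m/δ` outside a set of probability at most
`(m + 1) δ / (2m) ≤ δ`. On this good set, the Donsker–Varadhan change of measure gives
`2m ∫ Δ_S² dQ ≤ KL(Q‖P) + log (2m/δ)` for every posterior `Q` at once, and Jensen's inequality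
`(∫ Δ_S dQ)² ≤ ∫ Δ_S² dQ` concludes.
-/

open MeasureTheory

noncomputable def klDiv {H : Type*} [MeasurableSpace H] (Q P : Measure H) : ℝ :=
  ∫ h, Real.log ((Q.rnDeriv P h).toReal) ∂Q

open Real Set

lemma hasDerivAt_binary_pinsker_lhs (θ : ℝ) {t : ℝ} (ht : t ∈ Ioo (0 : ℝ) 1) :
    HasDerivAt (fun t => θ * log t + (1 - θ) * log (1 - t) + 2 * (θ - t) ^ 2)
      (-((t - θ) * (1 - 2 * t) ^ 2 / (t * (1 - t)))) t := by
  obtain ⟨ht0, ht1⟩ := ht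
  have hlog : HasDerivAt (fun t => log (1 - t)) (-1 / (1 - t)) t := by
    simpa using ((hasDerivAt_id t).const_sub 1).log (sub_ne_zero.2 ht1.ne')
  refine ((((hasDerivAt_log ht0.ne').const_mul θ).add (hlog.const_mul (1 - θ))).add
    ((((hasDerivAt_id t).const_sub θ).pow 2).const_mul 2)).congr_deriv ?_
  have : 1 - t ≠ 0 := by linarith
  field_simp
  simp only [id]
  ring

lemma binary_pinsker_of_le {θ p : ℝ} (hθ : 0 ≤ θ) (hθp : θ ≤ p) (hp : p < 1) :
    θ * log p + (1 - θ) * log (1 - p) + 2 * (θ - p) ^ 2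
      ≤ θ * log θ + (1 - θ) * log (1 - θ) := by
  have hcont : ContinuousOn (fun t => θ * log t + (1 - θ) * log (1 - t) + 2 * (θ - t) ^ 2)
      (Icc θ p) := by
    have hlog1 : ContinuousOn (fun t => log (1 - t)) (Icc θ p) :=
      ContinuousOn.log (by fun_prop) fun t ht => by linarith [ht.2]
    refine ContinuousOn.add (ContinuousOn.add ?_ (continuousOn_const.mul hlog1)) (by fun_prop)
    rcases hθ.eq_or_lt with rfl | hθ0
    · simpa using continuousOn_const
    · exact continuousOn_const.mul (continuousOn_log.mono fun t ht => (hθ0.trans_le ht.1).ne')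
  have hanti := antitoneOn_of_hasDerivWithinAt_nonpos (convex_Icc θ p) hcont
    (fun t ht => by
      rw [interior_Icc] at ht
      exact (hasDerivAt_binary_pinsker_lhs θ ⟨hθ.trans_lt ht.1, ht.2.trans hp⟩).hasDerivWithinAt)
    (fun t ht => by
      rw [interior_Icc] at ht
      have : 0 < t * (1 - t) := mul_pos (hθ.trans_lt ht.1) (by linarith [ht.2])
      have : 0 ≤ t - θ := by linarith [ht.1]
      exact neg_nonpos.2 (by positivity))
  simpa using hanti (left_mem_Icc.2 hθp) (right_mem_Icc.2 hθp) hθp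

lemma binary_pinsker {θ p : ℝ} (hθ : θ ∈ Icc (0 : ℝ) 1) (hp : p ∈ Ioo (0 : ℝ) 1) :
    θ * log p + (1 - θ) * log (1 - p) + 2 * (θ - p) ^ 2
      ≤ θ * log θ + (1 - θ) * log (1 - θ) := by
  rcases le_total θ p with hθp | hpθ
  · exact binary_pinsker_of_le hθ.1 hθp hp.2
  · have := binary_pinsker_of_le (sub_nonneg.2 hθ.2) (sub_le_sub_left hpθ 1) (by linarith [hp.1])
    simp only [sub_sub_cancel] at this
    linarith

open Finset in
lemma choose_mul_pow_mul_pow_le_one {m k : ℕ} (hk : k ≤ m) {θ : ℝ} (hθ : θ ∈ Icc (0 : ℝ) 1) :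
    m.choose k * (θ ^ k * (1 - θ) ^ (m - k)) ≤ 1 := by
  have hsum : ∑ j ∈ range (m + 1), θ ^ j * (1 - θ) ^ (m - j) * m.choose j = 1 := by
    rw [← add_pow, add_sub_cancel, one_pow]
  obtain ⟨hθ0, hθ1⟩ := hθ
  calc _ = θ ^ k * (1 - θ) ^ (m - k) * m.choose k := mul_comm _ _
    _ ≤ ∑ j ∈ range (m + 1), θ ^ j * (1 - θ) ^ (m - j) * m.choose j :=
        single_le_sum (f := fun j => θ ^ j * (1 - θ) ^ (m - j) * m.choose j)
          (fun j _ => by have := sub_nonneg.2 hθ1; positivity) (mem_range_succ_iff.2 hk)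
    _ = 1 := hsum

lemma pow_eq_exp_mul_log {x : ℝ} {n : ℕ} (h : 0 < x ∨ n = 0) : x ^ n = exp (n * log x) := by
  rcases h with h | rfl
  · rw [← log_pow, exp_log (pow_pos h n)]
  · simp

lemma cast_div_mem_Icc_zero_one {m k : ℕ} (hm : 0 < m) (hk : k ≤ m) : (k / m : ℝ) ∈ Icc (0 : ℝ) 1 :=
  ⟨by positivity, div_le_one_of_le₀ (by exact_mod_cast hk) (Nat.cast_nonneg m)⟩

lemma pow_mul_pow_mul_exp_le {m k : ℕ} (hm : 0 < m) (hk : k ≤ m) {p : ℝ}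
    (hp : p ∈ Icc (0 : ℝ) 1) :
    p ^ k * (1 - p) ^ (m - k) * exp (2 * m * (k / m - p) ^ 2)
      ≤ (k / m : ℝ) ^ k * (1 - k / m) ^ (m - k) := by
  have hm' : (0 : ℝ) < m := Nat.cast_pos.2 hm
  obtain ⟨hθ0, hθ1⟩ := cast_div_mem_Icc_zero_one hm hk
  set θ : ℝ := k / m with hθ
  have hRHS : 0 ≤ θ ^ k * (1 - θ) ^ (m - k) := by have := sub_nonneg.2 hθ1; positivity
  rcases hp.1.eq_or_lt with rfl | hp0
  · rcases k.eq_zero_or_pos with rfl | hk0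
    · simp [hθ]
    · simpa [zero_pow hk0.ne'] using hRHS
  rcases hp.2.eq_or_lt with rfl | hp1
  · rcases hk.eq_or_lt with rfl | hkm
    · simp [hθ, hm'.ne']
    · simpa [zero_pow (Nat.sub_ne_zero_of_lt hkm)] using hRHS
  have hθk : m * θ = k := by rw [hθ]; field_simp
  have hθmk : m * (1 - θ) = ((m - k : ℕ) : ℝ) := by rw [Nat.cast_sub hk, ← hθk]; ring
  have hθpos : 0 < θ ∨ k = 0 := by
    rcases k.eq_zero_or_pos with hk0 | hk0
    · exact .inr hk0
    · exact .inl (by positivity)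
  have hθpos' : 0 < 1 - θ ∨ m - k = 0 := by
    rcases hk.eq_or_lt with hkm | hkm
    · exact .inr (by omega)
    · exact .inl (sub_pos.2 ((div_lt_one hm').2 (by exact_mod_cast hkm)))
  calc p ^ k * (1 - p) ^ (m - k) * exp (2 * m * (θ - p) ^ 2)
      = exp (m * (θ * log p + (1 - θ) * log (1 - p) + 2 * (θ - p) ^ 2)) := by
        rw [pow_eq_exp_mul_log (.inl hp0), pow_eq_exp_mul_log (.inl (sub_pos.2 hp1)),
          ← exp_add, ← exp_add, ← hθk, ← hθmk]
        ring_nf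
    _ ≤ exp (m * (θ * log θ + (1 - θ) * log (1 - θ))) :=
        exp_le_exp.2 (mul_le_mul_of_nonneg_left (binary_pinsker ⟨hθ0, hθ1⟩ ⟨hp0, hp1⟩) hm'.le)
    _ = θ ^ k * (1 - θ) ^ (m - k) := by
        rw [pow_eq_exp_mul_log hθpos, pow_eq_exp_mul_log hθpos', ← exp_add, ← hθk, ← hθmk]
        ring_nf

open Finset in
lemma sum_choose_mul_pow_mul_exp_le {m : ℕ} (hm : 0 < m) {p : ℝ} (hp : p ∈ Icc (0 : ℝ) 1) :
    ∑ k ∈ range (m + 1), m.choose k * (p ^ k * (1 - p) ^ (m - k) * exp (2 * m * (k / m - p) ^ 2))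
      ≤ m + 1 := by
  calc _ ≤ ∑ k ∈ range (m + 1), (1 : ℝ) := sum_le_sum fun k hk => by
          have hk := mem_range_succ_iff.1 hk
          exact (mul_le_mul_of_nonneg_left (pow_mul_pow_mul_exp_le hm hk hp) (by positivity)).trans
            (choose_mul_pow_mul_pow_le_one hk (cast_div_mem_Icc_zero_one hm hk))
    _ = m + 1 := by simp

open Finset in
lemma ConvexOn.map_sum_le_sum_powerset {ι : Type*} [DecidableEq ι] {f : ℝ → ℝ}
    (hf : ConvexOn ℝ univ f) (s : Finset ι) {x : ι → ℝ} (hx : ∀ i ∈ s, x i ∈ Icc (0 : ℝ) 1) :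
    f (∑ i ∈ s, x i)
      ≤ ∑ A ∈ s.powerset, (∏ i ∈ s, if i ∈ A then x i else 1 - x i) * f #A := by
  -- The shift `c` lets the induction hypothesis be used at both `c` and `c + 1`.
  suffices h : ∀ c, f (c + ∑ i ∈ s, x i)
      ≤ ∑ A ∈ s.powerset, (∏ i ∈ s, if i ∈ A then x i else 1 - x i) * f (c + #A) by
    simpa using h 0
  induction s using Finset.induction_on with
  | empty => simp
  | insert a s ha ih =>
    intro c
    obtain ⟨hxa0, hxa1⟩ := hx a (mem_insert_self a s)
    have ih := ih fun i hi => hx i (mem_insert_of_mem hi)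
    have hA : ∀ A ∈ s.powerset, a ∉ A := fun A hA haA => ha (mem_powerset.1 hA haA)
    calc f (c + ∑ i ∈ insert a s, x i)
        = f ((1 - x a) • (c + ∑ i ∈ s, x i) + x a • (c + 1 + ∑ i ∈ s, x i)) := by
          rw [sum_insert ha, smul_eq_mul, smul_eq_mul]; ring_nf
      _ ≤ (1 - x a) • f (c + ∑ i ∈ s, x i) + x a • f (c + 1 + ∑ i ∈ s, x i) :=
          hf.2 trivial trivial (by linarith) hxa0 (by ring)
      _ ≤ (1 - x a) * ∑ A ∈ s.powerset,
              (∏ i ∈ s, if i ∈ A then x i else 1 - x i) * f (c + #A)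
          + x a * ∑ A ∈ s.powerset,
              (∏ i ∈ s, if i ∈ A then x i else 1 - x i) * f (c + 1 + #A) := by
          simp only [smul_eq_mul]
          exact add_le_add (mul_le_mul_of_nonneg_left (ih c) (by linarith))
            (mul_le_mul_of_nonneg_left (ih (c + 1)) hxa0)
      _ = _ := by
          rw [sum_powerset_insert ha, mul_sum, mul_sum]
          congr 1 <;> refine sum_congr rfl fun A hAs => ?_
          · rw [prod_insert ha, if_neg (hA A hAs)]
            ring
          · have hins : ∀ i ∈ s, i ∈ insert a A ↔ i ∈ A := fun i hi =>
              ⟨fun h => (mem_insert.1 h).resolve_left (ne_of_mem_of_not_mem hi ha),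
                mem_insert_of_mem⟩
            rw [prod_insert ha, if_pos (mem_insert_self a A), card_insert_of_notMem (hA A hAs),
              prod_congr rfl fun i hi => if_congr (hins i hi) rfl rfl]
            push_cast
            ring_nf

lemma ConvexOn.exp {E : Type*} [AddCommMonoid E] [Module ℝ E] {s : Set E} {g : E → ℝ}
    (hg : ConvexOn ℝ s g) : ConvexOn ℝ s fun x => exp (g x) :=
  ⟨hg.1, fun _ hx _ hy _ _ ha hb hab =>
    (exp_le_exp.2 (hg.2 hx hy ha hb hab)).trans (convexOn_exp.2 trivial trivial ha hb hab)⟩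

lemma convexOn_exp_mul_sq_div_sub {c m : ℝ} (hc : 0 ≤ c) (p : ℝ) :
    ConvexOn ℝ univ fun t => exp (c * (t / m - p) ^ 2) := by
  refine ConvexOn.exp ((((even_two.convexOn_pow (𝕜 := ℝ)).comp_affineMap
    (AffineMap.lineMap (-p) (m⁻¹ - p))).smul hc).congr fun t _ => ?_)
  simp only [Function.comp_apply, AffineMap.lineMap_apply_ring', smul_eq_mul]
  ring

section Maurer

open Finset

variable {Z : Type*} [MeasurableSpace Z] {μ : Measure Z} [IsProbabilityMeasure μ] {X : Z → ℝ}

lemma integral_mem_Icc_zero_one (hX : Measurable X) (hXb : ∀ z, X z ∈ Icc (0 : ℝ) 1) :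
    ∫ z, X z ∂μ ∈ Icc (0 : ℝ) 1 := by
  have hXint := Integrable.of_mem_Icc 0 1 hX.aemeasurable (ae_of_all μ hXb)
  refine ⟨integral_nonneg fun z => (hXb z).1, ?_⟩
  simpa using integral_mono hXint (integrable_const 1) fun z => (hXb z).2

lemma integral_pi_prod_ite {ι : Type*} [Fintype ι] [DecidableEq ι] (hX : Integrable X μ)
    (A : Finset ι) :
    ∫ S, ∏ i, (if i ∈ A then X (S i) else 1 - X (S i)) ∂(Measure.pi fun _ : ι => μ)
      = (∫ z, X z ∂μ) ^ #A * (1 - ∫ z, X z ∂μ) ^ (Fintype.card ι - #A) := by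
  rw [integral_fintype_prod_eq_prod (f := fun i z => if i ∈ A then X z else 1 - X z)]
  have hint : ∀ i, ∫ z, (if i ∈ A then X z else 1 - X z) ∂μ
      = if i ∈ A then ∫ z, X z ∂μ else 1 - ∫ z, X z ∂μ := fun i => by
    split_ifs
    · rfl
    · rw [integral_sub (integrable_const 1) hX, integral_const, probReal_univ, one_smul]
  simp only [hint]
  rw [prod_ite, prod_const, prod_const]
  simp [filter_not, card_sdiff]

-- Maurer's inequality, with `m + 1` in place of the sharper `2√m`: since `m + 1 ≤ 2m`, this
-- already yields the `log (2m/δ)` term.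
theorem integral_exp_two_mul_sq_sub_le (hX : Measurable X) (hXb : ∀ z, X z ∈ Icc (0 : ℝ) 1)
    {m : ℕ} (hm : 0 < m) :
    ∫ S, exp (2 * m * ((∫ z, X z ∂μ) - (m : ℝ)⁻¹ * ∑ i, X (S i)) ^ 2)
      ∂(Measure.pi fun _ : Fin m => μ) ≤ m + 1 := by
  have hXint := Integrable.of_mem_Icc 0 1 hX.aemeasurable (ae_of_all μ hXb)
  set p := ∫ z, X z ∂μ
  set f : ℝ → ℝ := fun t => exp (2 * m * (t / m - p) ^ 2)
  have hf : ConvexOn ℝ univ f := convexOn_exp_mul_sq_div_sub (by positivity) p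
  have hterm : ∀ A : Finset (Fin m), Integrable
      (fun S : Fin m → Z => ∏ i, (if i ∈ A then X (S i) else 1 - X (S i)))
      (Measure.pi fun _ : Fin m => μ) := fun A =>
    Integrable.fintype_prod (f := fun i z => if i ∈ A then X z else 1 - X z) fun i => by
      split_ifs
      exacts [hXint, (integrable_const 1).sub hXint]
  calc ∫ S, exp (2 * m * (p - (m : ℝ)⁻¹ * ∑ i, X (S i)) ^ 2) ∂(Measure.pi fun _ : Fin m => μ)
      = ∫ S, f (∑ i, X (S i)) ∂(Measure.pi fun _ : Fin m => μ) := by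
        congr 1 with S
        simp only [f]
        ring_nf
    _ ≤ ∫ S, ∑ A ∈ univ.powerset, (∏ i, if i ∈ A then X (S i) else 1 - X (S i)) * f #A
          ∂(Measure.pi fun _ : Fin m => μ) :=
        integral_mono_of_nonneg (ae_of_all _ fun S => (exp_pos _).le)
          (integrable_finsetSum _ fun A _ => (hterm A).mul_const _)
          (ae_of_all _ fun S => hf.map_sum_le_sum_powerset univ fun i _ => hXb (S i))
    _ = ∑ A ∈ (univ : Finset (Fin m)).powerset, p ^ #A * (1 - p) ^ (m - #A) * f #A := by
        rw [integral_finsetSum _ fun A _ => (hterm A).mul_const _]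
        refine sum_congr rfl fun A _ => ?_
        rw [integral_mul_const, integral_pi_prod_ite hXint, Fintype.card_fin]
    _ = ∑ k ∈ range (m + 1), m.choose k * (p ^ k * (1 - p) ^ (m - k) * f k) := by
        rw [sum_powerset_apply_card (fun k => p ^ k * (1 - p) ^ (m - k) * f k), card_univ,
          Fintype.card_fin]
        simp only [nsmul_eq_mul]
    _ ≤ m + 1 := sum_choose_mul_pow_mul_exp_le hm (integral_mem_Icc_zero_one hX hXb)

end Maurer

section ChangeOfMeasure

variable {H : Type*} [MeasurableSpace H] {P Q : Measure H} [IsProbabilityMeasure P]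
  [IsProbabilityMeasure Q]

-- Donsker–Varadhan: Gibbs' inequality `0 ≤ KL(Q ‖ P.tilted f)`, expanded.
lemma integral_le_klDiv_add_log_integral_exp (hQP : Q ≪ P) (hllr : Integrable (llr Q P) Q)
    {f : H → ℝ} (hfQ : Integrable f Q) (hfP : Integrable (fun h => exp (f h)) P) :
    ∫ h, f h ∂Q ≤ klDiv Q P + log (∫ h, exp (f h) ∂P) := by
  have := isProbabilityMeasure_tilted hfP
  have hgibbs := InformationTheory.integral_llr_add_sub_measure_univ_nonneg
    (hQP.trans (absolutelyContinuous_tilted hfP)) (integrable_llr_tilted_right hQP hfQ hllr hfP)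
  rw [integral_llr_tilted_right hQP hfQ hfP hllr] at hgibbs
  simp only [probReal_univ, add_sub_cancel_right] at hgibbs
  have hkl : klDiv Q P = ∫ h, llr Q P h ∂Q := rfl
  linarith

lemma integral_le_sqrt_klDiv_add_log_of_integral_exp_sq_le (hQP : Q ≪ P)
    (hllr : Integrable (llr Q P) Q) {Δ : H → ℝ} (hΔ : Measurable Δ) {C : ℝ}
    (hΔC : ∀ h, |Δ h| ≤ C) {c : ℝ} (hc : 0 < c) {K : ℝ}
    (hK : ∫ h, exp (c * Δ h ^ 2) ∂P ≤ K) :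
    ∫ h, Δ h ∂Q ≤ √((klDiv Q P + log K) / c) := by
  have hΔ2 : MemLp Δ 2 Q := MemLp.of_bound hΔ.aestronglyMeasurable C (ae_of_all _ hΔC)
  have hjensen : (∫ h, Δ h ∂Q) ^ 2 ≤ ∫ h, Δ h ^ 2 ∂Q := by
    have := ProbabilityTheory.variance_nonneg Δ Q
    rw [ProbabilityTheory.variance_eq_sub hΔ2] at this
    simpa using this
  have hsq_le : ∀ h, c * Δ h ^ 2 ≤ c * C ^ 2 := fun h =>
    mul_le_mul_of_nonneg_left (sq_le_sq' (abs_le.1 (hΔC h)).1 (abs_le.1 (hΔC h)).2) hc.le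
  have hexp : Integrable (fun h => exp (c * Δ h ^ 2)) P :=
    Integrable.of_bound (by fun_prop) (exp (c * C ^ 2)) (ae_of_all _ fun h => by
      rw [norm_of_nonneg (exp_pos _).le]; exact exp_le_exp.2 (hsq_le h))
  have hdv := integral_le_klDiv_add_log_integral_exp hQP hllr (f := fun h => c * Δ h ^ 2)
    (hΔ2.integrable_sq.const_mul c) hexp
  rw [integral_const_mul] at hdv
  have hlog := log_le_log (integral_exp_pos hexp) hK
  refine (le_abs_self _).trans (abs_le_sqrt ?_)
  rw [le_div_iff₀ hc]
  nlinarith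

end ChangeOfMeasure

lemma ofReal_one_sub_div_le_measure_integral_exp_lt {Ω H : Type*} [MeasurableSpace Ω]
    [MeasurableSpace H] {μ : Measure Ω} [IsProbabilityMeasure μ] {P : Measure H}
    [IsProbabilityMeasure P] {φ : Ω → H → ℝ} (hφ : Measurable (Function.uncurry φ)) {B : ℝ}
    (hφB : ∀ ω h, φ ω h ≤ B) {C : ℝ} (hC : ∀ h, ∫ ω, exp (φ ω h) ∂μ ≤ C) {c : ℝ} (hc : 0 < c) :
    ENNReal.ofReal (1 - C / c) ≤ μ {ω | ∫ h, exp (φ ω h) ∂P < c} := by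
  have hint : Integrable (fun q : Ω × H => exp (φ q.1 q.2)) (μ.prod P) :=
    Integrable.of_bound (hφ.exp.aestronglyMeasurable) (exp B) (ae_of_all _ fun q => by
      rw [norm_of_nonneg (exp_pos _).le]; exact exp_le_exp.2 (hφB q.1 q.2))
  set G : Ω → ℝ := fun ω => ∫ h, exp (φ ω h) ∂P
  have hG : Measurable G := (hφ.exp.stronglyMeasurable.integral_prod_right' (ν := P)).measurable
  have hGC : ∫ ω, G ω ∂μ ≤ C := by
    rw [integral_integral_swap hint]
    simpa using integral_mono_of_nonneg
      (ae_of_all _ fun h => integral_nonneg fun ω => (exp_pos _).le)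
      (integrable_const (μ := P) C) (ae_of_all _ hC)
  have hmarkov : μ.real {ω | c ≤ G ω} ≤ C / c := by
    rw [le_div_iff₀' hc]
    exact (mul_meas_ge_le_integral_of_nonneg
      (ae_of_all _ fun ω => integral_nonneg fun h => (exp_pos _).le)
      hint.integral_prod_left c).trans hGC
  have hgood : {ω | G ω < c} = {ω | c ≤ G ω}ᶜ := by ext; simp
  rw [hgood, ← ofReal_measureReal, probReal_compl_eq_one_sub (measurableSet_le measurable_const hG)]
  exact ENNReal.ofReal_le_ofReal (by linarith)

lemma inv_mul_sum_mem_Icc_zero_one {m : ℕ} {x : Fin m → ℝ} (hx : ∀ i, x i ∈ Icc (0 : ℝ) 1) :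
    (m : ℝ)⁻¹ * ∑ i, x i ∈ Icc (0 : ℝ) 1 := by
  have hsum : ∑ i, x i ≤ m := by
    simpa using Finset.sum_le_sum (s := Finset.univ) fun i _ => (hx i).2
  refine ⟨mul_nonneg (by positivity) (Finset.sum_nonneg fun i _ => (hx i).1), ?_⟩
  rcases m.eq_zero_or_pos with rfl | hm
  · simp
  · exact (inv_mul_le_one₀ (Nat.cast_pos.2 hm)).2 hsum

lemma ofReal_one_sub_div_le_measure_pac_bayes {Ω H : Type*} [MeasurableSpace Ω]
    [MeasurableSpace H] {μ : Measure Ω} [IsProbabilityMeasure μ] {P : Measure H}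
    [IsProbabilityMeasure P] {Δ : Ω → H → ℝ} (hΔ : Measurable (Function.uncurry Δ)) {B : ℝ}
    (hΔB : ∀ ω h, |Δ ω h| ≤ B) {c : ℝ} (hc : 0 < c) {C : ℝ}
    (hC : ∀ h, ∫ ω, exp (c * Δ ω h ^ 2) ∂μ ≤ C) {K : ℝ} (hK : 0 < K) :
    ENNReal.ofReal (1 - C / K) ≤ μ {ω | ∀ Q : Measure H, IsProbabilityMeasure Q → Q ≪ P →
      Integrable (llr Q P) Q → ∫ h, Δ ω h ∂Q ≤ √((klDiv Q P + log K) / c)} :=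
  (ofReal_one_sub_div_le_measure_integral_exp_lt (P := P) ((hΔ.pow_const 2).const_mul c)
    (fun ω h => mul_le_mul_of_nonneg_left (sq_le_sq' (abs_le.1 (hΔB ω h)).1
      (abs_le.1 (hΔB ω h)).2) hc.le) hC hK).trans
    (measure_mono fun ω hω _ _ hQP hllr => integral_le_sqrt_klDiv_add_log_of_integral_exp_sq_le
      hQP hllr (hΔ.comp measurable_prodMk_left) (hΔB ω) hc hω.le)

/-- PAC-Bayesian bound for a `[0,1]`-bounded loss: with probability at least
`1 - δ` over an i.i.d. sample `S` of size `m`, simultaneously for every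
posterior `Q` with finite `KL(Q‖P)`,
`E_{h∼Q}[R(h)] ≤ E_{h∼Q}[R̂(h,S)] + √((KL(Q‖P) + ln(2m/δ)) / (2m))`. -/
theorem pac_bayes_bound
    {Z : Type*} [MeasurableSpace Z] (μ : Measure Z) [IsProbabilityMeasure μ]
    {H : Type*} [MeasurableSpace H] (P : Measure H) [IsProbabilityMeasure P]
    (ℓ : H → Z → ℝ) (hmeas : Measurable (Function.uncurry ℓ))
    (hbd : ∀ h z, ℓ h z ∈ Set.Icc (0 : ℝ) 1)
    (m : ℕ) (hm : 1 ≤ m) (δ : ℝ) (hδ : δ ∈ Set.Ioo (0 : ℝ) 1) :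
    ENNReal.ofReal (1 - δ) ≤
      (Measure.pi fun _ : Fin m => μ)
        {S : Fin m → Z |
          ∀ Q : Measure H, IsProbabilityMeasure Q → Q ≪ P →
            Integrable (fun h => Real.log ((Q.rnDeriv P h).toReal)) Q →
            (∫ h, (∫ z, ℓ h z ∂μ) ∂Q)
              ≤ (∫ h, ((m : ℝ)⁻¹ * ∑ i, ℓ h (S i)) ∂Q)
                + Real.sqrt ((klDiv Q P + Real.log (2 * m / δ)) / (2 * m))} := by
  obtain ⟨hδ0, hδ1⟩ := hδ
  set R : H → ℝ := fun h => ∫ z, ℓ h z ∂μ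
  set Remp : (Fin m → Z) → H → ℝ := fun S h => (m : ℝ)⁻¹ * ∑ i, ℓ h (S i)
  have hR : Measurable R := (hmeas.stronglyMeasurable.integral_prod_right' (ν := μ)).measurable
  have hRemp : Measurable (Function.uncurry Remp) :=
    measurable_const.mul (Finset.measurable_sum _ fun i _ =>
      hmeas.comp (measurable_snd.prodMk ((measurable_pi_apply i).comp measurable_fst)))
  have hR01 : ∀ h, R h ∈ Icc (0 : ℝ) 1 := fun h =>
    integral_mem_Icc_zero_one (hmeas.comp measurable_prodMk_left) (hbd h)
  have hRemp01 : ∀ S h, Remp S h ∈ Icc (0 : ℝ) 1 := fun S h =>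
    inv_mul_sum_mem_Icc_zero_one fun i => hbd h (S i)
  have hpac := ofReal_one_sub_div_le_measure_pac_bayes (P := P) (Δ := fun S h => R h - Remp S h)
    ((hR.comp measurable_snd).sub hRemp) (B := 1)
    (fun S h => abs_sub_le_iff.2 ⟨by linarith [(hR01 h).2, (hRemp01 S h).1],
      by linarith [(hR01 h).1, (hRemp01 S h).2]⟩) (c := 2 * m) (by positivity) (C := m + 1)
    (fun h => integral_exp_two_mul_sq_sub_le (hmeas.comp measurable_prodMk_left) (hbd h) hm)
    (K := 2 * m / δ) (by positivity)
  refine le_trans ?_ (hpac.trans (measure_mono fun S hS Q hQ hQP hllr => ?_))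
  · refine ENNReal.ofReal_le_ofReal (sub_le_sub_left ?_ 1)
    rw [div_div_eq_mul_div, div_le_iff₀ (by positivity)]
    have : (1 : ℝ) ≤ m := by exact_mod_cast hm
    nlinarith
  · have hRempS : Measurable (Remp S) := hRemp.comp measurable_prodMk_left
    have hS := hS Q hQ hQP hllr
    rwa [integral_sub (Integrable.of_mem_Icc 0 1 hR.aemeasurable (ae_of_all _ hR01))
      (Integrable.of_mem_Icc 0 1 hRempS.aemeasurable (ae_of_all _ (hRemp01 S))),
      sub_le_iff_le_add'] at hS
end
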